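/- Fix d ∈ ℕ, ‖θ₀‖ > 0, σ² ≥ 0, and η > 0. Define E(α, β, γ) := ((β + (d+2)γ)α − 1)²‖θ₀‖²₂ + 2(d+2)α²γ²‖θ₀‖²₂ + σ² and L(α, γ) := ‖θ₀‖²₂(γα + γ − 1)² + σ². At the point (α, β, γ) = (1, 1, 0), one gradient-descent step on L with step size η updates γ to 4η‖θ₀‖²₂ (α unchanged), and the resulting zero-shot error satisfies E(1, 1, 4η‖θ₀‖²₂) − E(1, 1, 0) = 16(d+2)(d+4)η²‖θ₀‖⁶₂ > 0. -/

import Mathlib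

/-!
Both losses are explicit polynomials in `(α, β, γ)`. At `(α, γ) = (1, 0)` the few-shot loss is
flat in `α` (its `α`-derivative carries a factor `γ`), while `∂L/∂γ = -4‖θ₀‖²`; so the step moves
only `γ`, to `4η‖θ₀‖²`. Along `(1, 1, γ)` the zero-shot error grows like `(d+2)(d+4)γ²‖θ₀‖²`, which
is positive for every `γ ≠ 0`.
-/

-- The paper's `L` and `E`, with `r` standing for `‖θ₀‖²`.
def fewShotLoss (r σ2 α γ : ℝ) : ℝ := r * (γ * α + γ - 1) ^ 2 + σ2

def zeroShotError (d : ℕ) (r σ2 α β γ : ℝ) : ℝ :=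
  ((β + ((d : ℝ) + 2) * γ) * α - 1) ^ 2 * r + 2 * ((d : ℝ) + 2) * α ^ 2 * γ ^ 2 * r + σ2

theorem hasDerivAt_fewShotLoss_left (r σ2 α γ : ℝ) :
    HasDerivAt (fewShotLoss r σ2 · γ) (2 * r * γ * (γ * α + γ - 1)) α := by
  have h := ((((hasDerivAt_id' α).const_mul γ).add_const γ).sub_const 1).fun_pow 2
  exact ((h.const_mul r).add_const σ2).congr_deriv (by push_cast; ring)

theorem hasDerivAt_fewShotLoss_right (r σ2 α γ : ℝ) :
    HasDerivAt (fewShotLoss r σ2 α ·) (2 * r * (α + 1) * (γ * α + γ - 1)) γ := by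
  have h := ((((hasDerivAt_id' γ).mul_const α).fun_add (hasDerivAt_id' γ)).sub_const 1).fun_pow 2
  exact ((h.const_mul r).add_const σ2).congr_deriv (by push_cast; ring)

theorem zeroShotError_one_one_sub_zero (d : ℕ) (r σ2 γ : ℝ) :
    zeroShotError d r σ2 1 1 γ - zeroShotError d r σ2 1 1 0
      = ((d : ℝ) + 2) * ((d : ℝ) + 4) * γ ^ 2 * r := by
  unfold zeroShotError
  ring

theorem gradient_step_on_fs_loss_increases_zs_error_general
    {d : ℕ} (θ₀ : EuclideanSpace ℝ (Fin d)) (hθ₀ : 0 < ‖θ₀‖)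
    (σ2 : ℝ) (η : ℝ) (hη : 0 < η)
    (E : ℝ → ℝ → ℝ → ℝ)
    (hE : ∀ α β γ : ℝ, E α β γ =
      ((β + ((d : ℝ) + 2) * γ) * α - 1) ^ 2 * ‖θ₀‖ ^ 2
        + 2 * ((d : ℝ) + 2) * α ^ 2 * γ ^ 2 * ‖θ₀‖ ^ 2 + σ2)
    (L : ℝ → ℝ → ℝ)
    (hL : ∀ α γ : ℝ, L α γ = ‖θ₀‖ ^ 2 * (γ * α + γ - 1) ^ 2 + σ2) :
    deriv (fun α => L α 0) 1 = 0 ∧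
    (0 : ℝ) - η * deriv (fun γ => L 1 γ) 0 = 4 * η * ‖θ₀‖ ^ 2 ∧
    E 1 1 (4 * η * ‖θ₀‖ ^ 2) - E 1 1 0
      = 16 * ((d : ℝ) + 2) * ((d : ℝ) + 4) * η ^ 2 * ‖θ₀‖ ^ 6 ∧
    0 < E 1 1 (4 * η * ‖θ₀‖ ^ 2) - E 1 1 0 := by
  obtain rfl : L = fewShotLoss (‖θ₀‖ ^ 2) σ2 := funext₂ hL
  obtain rfl : E = zeroShotError d (‖θ₀‖ ^ 2) σ2 := funext₃ hE
  have hE_step : zeroShotError d (‖θ₀‖ ^ 2) σ2 1 1 (4 * η * ‖θ₀‖ ^ 2)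
      - zeroShotError d (‖θ₀‖ ^ 2) σ2 1 1 0
      = 16 * ((d : ℝ) + 2) * ((d : ℝ) + 4) * η ^ 2 * ‖θ₀‖ ^ 6 := by
    rw [zeroShotError_one_one_sub_zero]
    ring
  refine ⟨?_, ?_, hE_step, ?_⟩
  · rw [(hasDerivAt_fewShotLoss_left _ σ2 1 0).deriv]
    ring
  · rw [(hasDerivAt_fewShotLoss_right _ σ2 1 0).deriv]
    ring
  · rw [hE_step]
    positivity

/-- One gradient-descent step on the asymptotic few-shot loss `L` at the
zero-shot optimum `(α,β,γ) = (1,1,0)` leaves `α` unchanged, updates `γ` to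
`4η‖θ₀‖²`, and strictly increases the zero-shot error `E`. -/
theorem gradient_step_on_fs_loss_increases_zs_error
    {d : ℕ} (θ₀ : EuclideanSpace ℝ (Fin d)) (hθ₀ : 0 < ‖θ₀‖)
    (σ2 : ℝ) (hσ : 0 ≤ σ2) (η : ℝ) (hη : 0 < η)
    (E : ℝ → ℝ → ℝ → ℝ)
    (hE : ∀ α β γ : ℝ, E α β γ =
      ((β + ((d : ℝ) + 2) * γ) * α - 1) ^ 2 * ‖θ₀‖ ^ 2
        + 2 * ((d : ℝ) + 2) * α ^ 2 * γ ^ 2 * ‖θ₀‖ ^ 2 + σ2)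
    (L : ℝ → ℝ → ℝ)
    (hL : ∀ α γ : ℝ, L α γ = ‖θ₀‖ ^ 2 * (γ * α + γ - 1) ^ 2 + σ2) :
    deriv (fun α => L α 0) 1 = 0 ∧
    (0 : ℝ) - η * deriv (fun γ => L 1 γ) 0 = 4 * η * ‖θ₀‖ ^ 2 ∧
    E 1 1 (4 * η * ‖θ₀‖ ^ 2) - E 1 1 0
      = 16 * ((d : ℝ) + 2) * ((d : ℝ) + 4) * η ^ 2 * ‖θ₀‖ ^ 6 ∧
    0 < E 1 1 (4 * η * ‖θ₀‖ ^ 2) - E 1 1 0 :=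
  gradient_step_on_fs_loss_increases_zs_error_general θ₀ hθ₀ σ2 η hη E hE L hL
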